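/- Let ψ be a primitive 2n-th root of unity in Z/qZ with n even, and let NTT^ψ(v)_j = Σ_{i=0}^{n-1} ψ^{2ij+i} v_i. Define A_j = Σ_{i=0}^{n/2-1} ψ^{4ij+2i} v_{2i} and B_j = Σ_{i=0}^{n/2-1} ψ^{4ij+2i} v_{2i+1}. Then for 0 ≤ j < n/2: NTT^ψ(v)_j = A_j + ψ^{2j+1} B_j and NTT^ψ(v)_{j+n/2} = A_j - ψ^{2j+1} B_j (Cooley–Tukey butterfly). -/
import Mathlib

open Finset

lemma sum_range_two_mul' {M : Type*} [AddCommMonoid M] (m : ℕ) (f : ℕ → M) :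
    ∑ i ∈ range (2 * m), f i = (∑ i ∈ range m, f (2 * i)) + ∑ i ∈ range m, f (2 * i + 1) := by
  induction m with
  | zero => simp
  | succ k ih =>
    have h : 2 * (k + 1) = (2 * k) + 1 + 1 := by ring
    rw [h, sum_range_succ, sum_range_succ, sum_range_succ, sum_range_succ, ih]
    abel

theorem cooley_tukey_butterfly (q n : ℕ) (hq : Nat.Prime q) (hn : 0 < n) (h2 : 2 ∣ n)
    (ψ : ZMod q) (hψn : ψ ^ n = -1) (hord : orderOf ψ = 2 * n)
    (v : Fin n → ZMod q) (j : ℕ) (hj : j < n / 2) :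
    (∑ i : Fin n, ψ ^ (2 * i.val * j + i.val) * v i)
      = (∑ i : Fin (n / 2), ψ ^ (4 * i.val * j + 2 * i.val) * v ⟨2 * i.val, by have := i.isLt; omega⟩)
        + ψ ^ (2 * j + 1) *
          (∑ i : Fin (n / 2), ψ ^ (4 * i.val * j + 2 * i.val) * v ⟨2 * i.val + 1, by have := i.isLt; omega⟩)
    ∧ (∑ i : Fin n, ψ ^ (2 * i.val * (j + n / 2) + i.val) * v i)
      = (∑ i : Fin (n / 2), ψ ^ (4 * i.val * j + 2 * i.val) * v ⟨2 * i.val, by have := i.isLt; omega⟩)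
        - ψ ^ (2 * j + 1) *
          (∑ i : Fin (n / 2), ψ ^ (4 * i.val * j + 2 * i.val) * v ⟨2 * i.val + 1, by have := i.isLt; omega⟩) := by
  obtain ⟨m, hm⟩ := h2
  have hm2 : n / 2 = m := by omega
  have hψm : ψ ^ (2 * m) = -1 := by rw [← hm]; exact hψn
  set vv : ℕ → ZMod q := fun i => if h : i < n then v ⟨i, h⟩ else 0 with hvv
  have hL : ∀ e : ℕ → ℕ, (∑ i : Fin n, ψ ^ e i.val * v i)
      = ∑ i ∈ range n, ψ ^ e i * vv i := by
    intro e
    rw [← Fin.sum_univ_eq_sum_range (fun i => ψ ^ e i * vv i)]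
    exact Finset.sum_congr rfl (fun i _ => by simp [hvv, i.isLt])
  have hA : (∑ i : Fin (n / 2), ψ ^ (4 * i.val * j + 2 * i.val)
        * v ⟨2 * i.val, by have := i.isLt; omega⟩)
      = ∑ i ∈ range (n / 2), ψ ^ (4 * i * j + 2 * i) * vv (2 * i) := by
    rw [← Fin.sum_univ_eq_sum_range (fun i => ψ ^ (4 * i * j + 2 * i) * vv (2 * i))]
    refine Finset.sum_congr rfl (fun i _ => ?_)
    have hi := i.isLt
    simp only [hvv]
    rw [dif_pos (by omega)]
  have hB : (∑ i : Fin (n / 2), ψ ^ (4 * i.val * j + 2 * i.val)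
        * v ⟨2 * i.val + 1, by have := i.isLt; omega⟩)
      = ∑ i ∈ range (n / 2), ψ ^ (4 * i * j + 2 * i) * vv (2 * i + 1) := by
    rw [← Fin.sum_univ_eq_sum_range (fun i => ψ ^ (4 * i * j + 2 * i) * vv (2 * i + 1))]
    refine Finset.sum_congr rfl (fun i _ => ?_)
    have hi := i.isLt
    simp only [hvv]
    rw [dif_pos (by omega)]
  constructor
  · rw [hL (fun i => 2 * i * j + i), hA, hB, hm2,
      show range n = range (2 * m) by rw [hm], sum_range_two_mul', mul_sum]
    congr 1
    · exact Finset.sum_congr rfl (fun k _ => by congr 2; ring)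
    · refine Finset.sum_congr rfl (fun k _ => ?_)
      have he : 2 * (2 * k + 1) * j + (2 * k + 1)
          = (2 * j + 1) + (4 * k * j + 2 * k) := by ring
      rw [he, pow_add, mul_assoc]
  · rw [hL (fun i => 2 * i * (j + n / 2) + i), hA, hB, hm2,
      show range n = range (2 * m) by rw [hm], sum_range_two_mul',
      sub_eq_add_neg, mul_sum, ← Finset.sum_neg_distrib]
    congr 1
    · refine Finset.sum_congr rfl (fun k _ => ?_)
      have he : 2 * (2 * k) * (j + m) + 2 * k
          = (4 * k * j + 2 * k) + (2 * m) * (2 * k) := by ring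
      rw [he, pow_add, pow_mul, hψm, Even.neg_one_pow ⟨k, by ring⟩, mul_one]
    · refine Finset.sum_congr rfl (fun k _ => ?_)
      have he : 2 * (2 * k + 1) * (j + m) + (2 * k + 1)
          = ((2 * j + 1) + (4 * k * j + 2 * k)) + (2 * m) * (2 * k + 1) := by ring
      rw [he, pow_add, pow_mul, hψm, Odd.neg_one_pow ⟨k, by ring⟩, pow_add]
      ring
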